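/- Let CoP(T) = 0.0068 T^2 + 0.0008 T + 0.458 and define f(T) = 1 + 1/CoP(T) for T > 0. Then the function F(x) = log(f(e^x)) is convex on the interval [log 11, ∞). -/

import Mathlib

/-!
With `T = eˣ`, `F'(x) = T g'(T)` where `g = log ∘ f`, so `F` is convex on `[log 11, ∞)` as soon as
`T ↦ T g'(T)` is monotone on `[11, ∞)`. Here `T g'(T) = -T CoP'(T) / (CoP(T) (CoP(T) + 1))`, and
the sign of its derivative is that of a degree-5 polynomial in `T` that is nonnegative for `T ≥ 11`.
-/

noncomputable def CoP (T : ℝ) : ℝ := 0.0068 * T ^ 2 + 0.0008 * T + 0.458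

noncomputable def fCoP (T : ℝ) : ℝ := 1 + 1 / CoP T

open Real Set

theorem convexOn_comp_exp_of_monotoneOn_mul {g g' : ℝ → ℝ} {a : ℝ} (ha : 0 < a)
    (hg : ∀ T, a ≤ T → HasDerivAt g (g' T) T) (hmono : MonotoneOn (fun T => T * g' T) (Ici a)) :
    ConvexOn ℝ (Ici (log a)) (fun x => g (exp x)) := by
  have hexp : ∀ x ∈ Ici (log a), a ≤ exp x := fun x hx => by
    simpa [exp_log ha] using exp_le_exp.2 (mem_Ici.1 hx)
  have hderiv : ∀ x ∈ Ici (log a), HasDerivAt (fun x => g (exp x)) (exp x * g' (exp x)) x :=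
    fun x hx => by rw [mul_comm]; exact (hg _ (hexp x hx)).comp x (hasDerivAt_exp x)
  refine MonotoneOn.convexOn_of_deriv (convex_Ici _)
    (fun x hx => (hderiv x hx).continuousAt.continuousWithinAt)
    (fun x hx => (hderiv x (interior_subset hx)).differentiableAt.differentiableWithinAt) ?_
  intro x hx y hy hxy
  rw [(hderiv x (interior_subset hx)).deriv, (hderiv y (interior_subset hy)).deriv]
  exact hmono (hexp x (interior_subset hx)) (hexp y (interior_subset hy)) (exp_le_exp.2 hxy)

theorem CoP_pos (T : ℝ) : 0 < CoP T := by
  unfold CoP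
  nlinarith [sq_nonneg (17 * T + 1)]

theorem hasDerivAt_CoP (T : ℝ) : HasDerivAt CoP (0.0136 * T + 0.0008) T :=
  ((((hasDerivAt_id T).pow 2).const_mul 0.0068).add
    ((hasDerivAt_id T).const_mul 0.0008)).add_const 0.458 |>.congr_deriv (by simp only [id, mul_one]; ring)

theorem hasDerivAt_fCoP (T : ℝ) : HasDerivAt fCoP (-(0.0136 * T + 0.0008) / CoP T ^ 2) T := by
  have hf : fCoP = fun T => 1 + (CoP T)⁻¹ := by funext T; simp [fCoP]
  rw [hf]
  exact ((hasDerivAt_CoP T).inv (CoP_pos T).ne').const_add 1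

theorem hasDerivAt_log_fCoP (T : ℝ) :
    HasDerivAt (fun T => log (fCoP T)) (-(0.0136 * T + 0.0008) / (CoP T * (CoP T + 1))) T := by
  have hq := CoP_pos T
  have hf : 0 < fCoP T := by unfold fCoP; positivity
  refine ((hasDerivAt_fCoP T).log hf.ne').congr_deriv ?_
  unfold fCoP
  field_simp

theorem CoP_elasticity_ineq {T : ℝ} (hT : 11 ≤ T) :
    (0.0272 * T + 0.0008) * (CoP T * (CoP T + 1))
      ≤ (0.0136 * T ^ 2 + 0.0008 * T) * ((0.0136 * T + 0.0008) * (2 * CoP T + 1)) := by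
  have h := sub_nonneg.2 hT
  unfold CoP
  nlinarith [pow_nonneg h 3, pow_nonneg h 4, pow_nonneg h 5, mul_nonneg h h]

theorem monotoneOn_mul_deriv_log_fCoP :
    MonotoneOn (fun T => T * (-(0.0136 * T + 0.0008) / (CoP T * (CoP T + 1)))) (Ici 11) := by
  have hderiv : ∀ T : ℝ, HasDerivAt (fun T => T * (-(0.0136 * T + 0.0008) / (CoP T * (CoP T + 1))))
      (((0.0136 * T ^ 2 + 0.0008 * T) * ((0.0136 * T + 0.0008) * (2 * CoP T + 1))
        - (0.0272 * T + 0.0008) * (CoP T * (CoP T + 1))) / (CoP T * (CoP T + 1)) ^ 2) T := by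
    intro T
    have hq := CoP_pos T
    have hD := (hasDerivAt_CoP T).mul ((hasDerivAt_CoP T).add_const 1)
    have hN := (((hasDerivAt_id T).const_mul 0.0136).add_const 0.0008).neg
    have hDpos : 0 < CoP T * (CoP T + 1) := by positivity
    refine ((hasDerivAt_id T).mul (hN.div hD hDpos.ne')).congr_deriv ?_
    simp only [Pi.mul_apply, Pi.neg_apply, Pi.div_apply, id]
    field_simp
    ring
  refine monotoneOn_of_hasDerivWithinAt_nonneg (convex_Ici _)
    (fun T _ => (hderiv T).continuousAt.continuousWithinAt)
    (fun T _ => (hderiv T).hasDerivWithinAt) fun T hT => ?_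
  rw [interior_Ici] at hT
  exact div_nonneg (sub_nonneg.2 (CoP_elasticity_ineq hT.le)) (sq_nonneg _)

/-- The log-log transform `F(x) = log (f (e^x))` of `f(T) = 1 + 1/CoP(T)` is
convex on `[log 11, ∞)`. -/
theorem stmt0 :
    ConvexOn ℝ (Set.Ici (Real.log 11))
      (fun x : ℝ => Real.log (fCoP (Real.exp x))) :=
  convexOn_comp_exp_of_monotoneOn_mul (by norm_num) (fun T _ => hasDerivAt_log_fCoP T)
    monotoneOn_mul_deriv_log_fCoP
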